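/- Let T = {(x,y) ∈ ℝ² : 0 ≤ y ≤ x ≤ 1}, let f : T → ℝ and g : [0,1] → ℝ be continuous. Then there exists a unique continuous function k : T → ℝ such that (i) for every (x,y) in T with 0 ≤ y < x < 1, the map s ↦ k(x+s, y+s) is differentiable at s = 0 with derivative equal to ∫_y^x k(x,ξ) f(ξ,y) dξ − f(x,y) (i.e., k satisfies k_x(x,y) + k_y(x,y) = ∫_y^x k(x,ξ) f(ξ,y) dξ − f(x,y) in the sense of derivatives along the characteristic direction (1,1)), and (ii) k(x,0) = ∫₀ˣ k(x,y) g(y) dy − g(x) for all x ∈ [0,1]. -/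

import Mathlib

/-!
Integrating the kernel equation along the characteristic through `(x, y)`, from its foot
`(x - y, 0)` where the boundary condition prescribes the value, turns the problem into the
fixed-point equation `k = kernelOperator f g k` on `C(T, ℝ)`. The operator is of Volterra type:
measured in the weight `2x - y`, which dominates `2(x - y)` at the foot and grows along the
characteristic, each application gains one order of integration, so the `n`-th iterate is
Lipschitz with constant `(2M)ⁿ / n!`, `M = ‖g‖ + ‖f‖`, and some iterate is a contraction.
Conversely, a solution is fixed by the operator off the diagonal by the fundamental theorem of
calculus along characteristics, and on the diagonal, where the equation says nothing, by
continuity.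
-/

open Set

/-- The triangular domain `T = {(x,y) : 0 ≤ y ≤ x ≤ 1}`. -/
def Tri : Set (ℝ × ℝ) := {p | 0 ≤ p.2 ∧ p.2 ≤ p.1 ∧ p.1 ≤ 1}

open Filter Topology MeasureTheory Function
open scoped Nat

noncomputable section

theorem existsUnique_isFixedPt_of_dist_iterate_le {α : Type*} [MetricSpace α]
    [CompleteSpace α] [Nonempty α] {Φ : α → α} (C : ℝ)
    (hΦ : ∀ n u v, dist (Φ^[n] u) (Φ^[n] v) ≤ C ^ n / n ! * dist u v) :
    ∃! u, IsFixedPt Φ u := by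
  obtain ⟨n, hn⟩ := ((FloorSemiring.tendsto_pow_div_factorial_atTop C).eventually_lt_const
    zero_lt_one).exists
  have hcontr : ContractingWith (C ^ n / n !).toNNReal Φ^[n] :=
    ⟨by simpa using hn, LipschitzWith.of_dist_le_mul fun u v =>
      (hΦ n u v).trans (by gcongr; exact Real.le_coe_toNNReal _)⟩
  exact ⟨_, hcontr.isFixedPt_fixedPoint_iterate, fun u hu =>
    hcontr.fixedPoint_unique (hu.iterate n)⟩

theorem isCompact_Tri : IsCompact Tri :=
  isCompact_Icc.of_isClosed_subset
    ((isClosed_le continuous_const continuous_snd).inter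
      ((isClosed_le continuous_snd continuous_fst).inter
        (isClosed_le continuous_fst continuous_const)))
    (fun _ ⟨h0, h1, h2⟩ => ⟨⟨h0.trans h1, h0⟩, h2, h1.trans h2⟩ :
      Tri ⊆ Icc ((0 : ℝ), (0 : ℝ)) (1, 1))

instance : CompactSpace Tri := isCompact_iff_compactSpace.mp isCompact_Tri

theorem Tri_subset_closure_sep_lt : Tri ⊆ closure {p ∈ Tri | p.2 < p.1} := by
  rintro ⟨x, y⟩ ⟨hy, hyx, hx⟩
  let q : ℝ → ℝ × ℝ := fun t => (x + t * (1 - x), (1 - t) * y)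
  have hq : Tendsto q (𝓝[>] 0) (𝓝 (x, y)) :=
    ((by fun_prop : Continuous q).tendsto' 0 (x, y) (by simp [q])).mono_left nhdsWithin_le_nhds
  refine mem_closure_of_tendsto hq ?_
  filter_upwards [Ioo_mem_nhdsGT zero_lt_one] with t ⟨ht0, ht1⟩
  exact ⟨⟨by nlinarith, by nlinarith, by nlinarith⟩, by nlinarith⟩

def projTri (p : ℝ × ℝ) : Tri :=
  ⟨(projIcc 0 1 zero_le_one p.1, projIcc 0 1 zero_le_one (min p.2 p.1)),
    (projIcc (0 : ℝ) 1 zero_le_one _).2.1,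
    Subtype.coe_le_coe.2 (monotone_projIcc zero_le_one (min_le_right _ _)),
    (projIcc (0 : ℝ) 1 zero_le_one _).2.2⟩

theorem continuous_projTri : Continuous projTri :=
  Continuous.subtype_mk (by fun_prop) _

theorem projTri_of_mem {p : ℝ × ℝ} (hp : p ∈ Tri) : projTri p = ⟨p, hp⟩ := by
  obtain ⟨h0, h1, h2⟩ := hp
  simp only [projTri, min_eq_left h1, projIcc_of_mem _ ⟨h0.trans h1, h2⟩,
    projIcc_of_mem _ ⟨h0, h1.trans h2⟩]

def extendTri (u : C(Tri, ℝ)) (x y : ℝ) : ℝ := u (projTri (x, y))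

theorem continuous_extendTri (u : C(Tri, ℝ)) : Continuous (uncurry (extendTri u)) :=
  u.continuous.comp continuous_projTri

theorem extendTri_of_mem (u : C(Tri, ℝ)) {x y : ℝ} (h : (x, y) ∈ Tri) :
    extendTri u x y = u ⟨(x, y), h⟩ := by
  rw [extendTri, projTri_of_mem h]

theorem abs_integral_le_of_abs_le_pow_sub {v : ℝ → ℝ} {a b K A : ℝ} {n : ℕ} (hA : 0 ≤ A)
    (hab : a ≤ b) (hbK : b ≤ K) (hv : ∀ ξ ∈ Icc a b, |v ξ| ≤ A * (K - ξ) ^ n / n !) :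
    |∫ ξ in a..b, v ξ| ≤ A * (K - a) ^ (n + 1) / (n + 1)! := by
  calc |∫ ξ in a..b, v ξ|
      ≤ ∫ ξ in a..b, A * (K - ξ) ^ n / n ! := by
        rw [← Real.norm_eq_abs]
        exact intervalIntegral.norm_integral_le_of_norm_le hab
          (ae_of_all _ fun ξ hξ => hv ξ (Ioc_subset_Icc_self hξ))
          (Continuous.intervalIntegrable (by fun_prop) _ _)
    _ = A * ((K - a) ^ (n + 1) - (K - b) ^ (n + 1)) / (n + 1)! := by
        simp only [mul_div_assoc, intervalIntegral.integral_const_mul,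
          intervalIntegral.integral_div, intervalIntegral.integral_comp_sub_left (fun ξ => ξ ^ n),
          integral_pow]
        push_cast [Nat.factorial_succ]
        field_simp
    _ ≤ A * (K - a) ^ (n + 1) / (n + 1)! := by
        gcongr
        exact sub_le_self _ (pow_nonneg (sub_nonneg.mpr hbK) _)

theorem abs_integral_le_of_abs_le_pow_add {v : ℝ → ℝ} {a b K A : ℝ} {n : ℕ} (hA : 0 ≤ A)
    (hab : a ≤ b) (haK : 0 ≤ K + a) (hv : ∀ t ∈ Icc a b, |v t| ≤ A * (K + t) ^ n / n !) :
    |∫ t in a..b, v t| ≤ A * (K + b) ^ (n + 1) / (n + 1)! := by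
  calc |∫ t in a..b, v t|
      ≤ ∫ t in a..b, A * (K + t) ^ n / n ! := by
        rw [← Real.norm_eq_abs]
        exact intervalIntegral.norm_integral_le_of_norm_le hab
          (ae_of_all _ fun t ht => hv t (Ioc_subset_Icc_self ht))
          (Continuous.intervalIntegrable (by fun_prop) _ _)
    _ = A * ((K + b) ^ (n + 1) - (K + a) ^ (n + 1)) / (n + 1)! := by
        simp only [mul_div_assoc, intervalIntegral.integral_const_mul,
          intervalIntegral.integral_div, intervalIntegral.integral_comp_add_left (fun t => t ^ n),
          integral_pow]
        push_cast [Nat.factorial_succ]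
        field_simp
    _ ≤ A * (K + b) ^ (n + 1) / (n + 1)! := by
        gcongr
        exact sub_le_self _ (pow_nonneg haK _)

theorem pow_succ_div_factorial_le {w : ℝ} (hw : 0 ≤ w) {n : ℕ} (hwn : w ≤ n + 1) :
    w ^ (n + 1) / (n + 1)! ≤ w ^ n / n ! := by
  rw [Nat.factorial_succ, pow_succ, Nat.cast_mul, mul_comm (w ^ n), ← div_mul_div_comm]
  push_cast
  exact mul_le_of_le_one_left (by positivity) ((div_le_one (by positivity)).mpr hwn)

def charRHS (f k : ℝ → ℝ → ℝ) (x y : ℝ) : ℝ :=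
  (∫ ξ in y..x, k x ξ * f ξ y) - f x y

def boundaryTerm (g : ℝ → ℝ) (k : ℝ → ℝ → ℝ) (x : ℝ) : ℝ :=
  (∫ y in (0 : ℝ)..x, k x y * g y) - g x

/-- The kernel equation integrated along the characteristic from `(x - y, 0)` to `(x, y)`,
with the boundary condition supplying the value at its foot. -/
def kernelOperator (f : ℝ → ℝ → ℝ) (g : ℝ → ℝ) (k : ℝ → ℝ → ℝ) (x y : ℝ) : ℝ :=
  boundaryTerm g k (x - y) + ∫ t in (0 : ℝ)..y, charRHS f k (x - y + t) t

section Operator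

variable {f k k₁ k₂ : ℝ → ℝ → ℝ} {g : ℝ → ℝ}

theorem continuous_charRHS (hf : Continuous (uncurry f)) (hk : Continuous (uncurry k)) :
    Continuous (uncurry (charRHS f k)) := by
  have hI : Continuous (uncurry fun (p : ℝ × ℝ) ξ => k p.1 ξ * f ξ p.2) :=
    (hk.comp (continuous_fst.fst.prodMk continuous_snd)).mul
      (hf.comp (continuous_snd.prodMk continuous_fst.snd))
  have hsub : ∀ p : ℝ × ℝ, (∫ ξ in p.2..p.1, k p.1 ξ * f ξ p.2) =
      (∫ ξ in (0 : ℝ)..p.1, k p.1 ξ * f ξ p.2) -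
        ∫ ξ in (0 : ℝ)..p.2, k p.1 ξ * f ξ p.2 :=
    fun p => (intervalIntegral.integral_interval_sub_left
      ((hI.comp (Continuous.prodMk_right p)).intervalIntegrable _ _)
      ((hI.comp (Continuous.prodMk_right p)).intervalIntegrable _ _)).symm
  have hsplit : uncurry (charRHS f k) = fun p => ((∫ ξ in (0 : ℝ)..p.1, k p.1 ξ * f ξ p.2) -
      ∫ ξ in (0 : ℝ)..p.2, k p.1 ξ * f ξ p.2) - f p.1 p.2 :=
    funext fun p => by rw [← hsub]; rfl
  rw [hsplit]
  exact ((intervalIntegral.continuous_parametric_intervalIntegral_of_continuous hI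
    continuous_fst).sub (intervalIntegral.continuous_parametric_intervalIntegral_of_continuous hI
      continuous_snd)).sub hf

theorem continuous_boundaryTerm (hg : Continuous g) (hk : Continuous (uncurry k)) :
    Continuous (boundaryTerm g k) :=
  (intervalIntegral.continuous_parametric_intervalIntegral_of_continuous
    ((hk.comp (by fun_prop)).mul (hg.comp continuous_snd)) continuous_id).sub hg

theorem continuous_kernelOperator (hf : Continuous (uncurry f)) (hg : Continuous g)
    (hk : Continuous (uncurry k)) : Continuous (uncurry (kernelOperator f g k)) :=
  ((continuous_boundaryTerm hg hk).comp (by fun_prop)).add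
    (intervalIntegral.continuous_parametric_intervalIntegral_of_continuous
      (f := fun (p : ℝ × ℝ) t => charRHS f k (p.1 - p.2 + t) t)
      ((continuous_charRHS hf hk).comp
        (((continuous_fst.fst.sub continuous_fst.snd).add continuous_snd).prodMk continuous_snd))
      continuous_snd)

theorem charRHS_congr {f₁ f₂ : ℝ → ℝ → ℝ} {x y : ℝ} (hyx : y ≤ x)
    (hf : ∀ ξ ∈ Icc y x, f₁ ξ y = f₂ ξ y)
    (hk : ∀ ξ ∈ Icc y x, k₁ x ξ = k₂ x ξ) :
    charRHS f₁ k₁ x y = charRHS f₂ k₂ x y := by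
  rw [charRHS, charRHS, hf x ⟨hyx, le_rfl⟩, intervalIntegral.integral_congr fun ξ hξ => ?_]
  rw [uIcc_of_le hyx] at hξ
  simp only [hf ξ hξ, hk ξ hξ]

theorem boundaryTerm_congr {g₁ g₂ : ℝ → ℝ} {x : ℝ} (hx : 0 ≤ x)
    (hg : ∀ η ∈ Icc 0 x, g₁ η = g₂ η) (hk : ∀ η ∈ Icc 0 x, k₁ x η = k₂ x η) :
    boundaryTerm g₁ k₁ x = boundaryTerm g₂ k₂ x := by
  rw [boundaryTerm, boundaryTerm, hg x ⟨hx, le_rfl⟩,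
    intervalIntegral.integral_congr fun η hη => ?_]
  rw [uIcc_of_le hx] at hη
  simp only [hg η hη, hk η hη]

theorem kernelOperator_zero (x : ℝ) : kernelOperator f g k x 0 = boundaryTerm g k x := by
  simp [kernelOperator]

theorem hasDerivAt_kernelOperator_char (hf : Continuous (uncurry f)) (hk : Continuous (uncurry k))
    (x y : ℝ) :
    HasDerivAt (fun s => kernelOperator f g k (x + s) (y + s)) (charRHS f k x y) 0 := by
  have hR : Continuous fun t => charRHS f k (x - y + t) t :=
    (continuous_charRHS hf hk).comp (by fun_prop : Continuous fun t => (x - y + t, t))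
  have h := ((hR.integral_hasStrictDerivAt 0 (y + 0)).hasDerivAt.comp_const_add y 0).const_add
    (boundaryTerm g k (x - y))
  simp only [add_zero, sub_add_cancel] at h
  simpa only [kernelOperator, add_sub_add_right_eq_sub] using h

theorem eq_add_integral_of_hasDerivAt_char {R : ℝ → ℝ → ℝ}
    (hk : ContinuousOn (uncurry k) Tri) (hR : Continuous (uncurry R))
    (hderiv : ∀ x y, 0 ≤ y → y < x → x < 1 →
      HasDerivAt (fun s => k (x + s) (y + s)) (R x y) 0)
    {x y : ℝ} (hy : 0 ≤ y) (hyx : y < x) (hx : x ≤ 1) :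
    k x y = k (x - y) 0 + ∫ t in (0 : ℝ)..y, R (x - y + t) t := by
  have hmaps : MapsTo (fun t => (x - y + t, t)) (Icc 0 y) Tri :=
    fun t ⟨ht0, hty⟩ => ⟨ht0, by linarith, by linarith⟩
  have hftc := intervalIntegral.integral_eq_sub_of_hasDerivAt_of_le hy
    (hk.comp (by fun_prop) hmaps) (fun t ⟨ht0, hty⟩ => ?_)
    ((hR.comp (by fun_prop : Continuous fun t => (x - y + t, t))).intervalIntegrable 0 y)
  · simp only [comp_apply, uncurry_apply_pair, add_zero, sub_add_cancel] at hftc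
    linarith
  · have h := HasDerivAt.comp_sub_const t t
      (by simpa only [sub_self] using hderiv (x - y + t) t ht0.le (by linarith) (by linarith))
    simp only [add_add_sub_cancel, add_sub_cancel] at h
    exact h

theorem kernelOperator_sub (hf : Continuous (uncurry f)) (hk₁ : Continuous (uncurry k₁))
    (hk₂ : Continuous (uncurry k₂)) (x y : ℝ) :
    kernelOperator f g k₁ x y - kernelOperator f g k₂ x y =
      (boundaryTerm g k₁ (x - y) - boundaryTerm g k₂ (x - y)) +
        ∫ t in (0 : ℝ)..y, (charRHS f k₁ (x - y + t) t - charRHS f k₂ (x - y + t) t) := by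
  have hint : ∀ k, Continuous (uncurry k) →
      IntervalIntegrable (fun t => charRHS f k (x - y + t) t) volume 0 y :=
    fun k hk => ((continuous_charRHS hf hk).comp
      (by fun_prop : Continuous fun t => (x - y + t, t))).intervalIntegrable _ _
  rw [kernelOperator, kernelOperator,
    intervalIntegral.integral_sub (hint k₁ hk₁) (hint k₂ hk₂)]
  ring

section Estimates

variable {A M : ℝ} {n : ℕ}

theorem abs_boundaryTerm_sub_le (hg : Continuous g) (hk₁ : Continuous (uncurry k₁))
    (hk₂ : Continuous (uncurry k₂)) (hA : 0 ≤ A)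
    (hk : ∀ p ∈ Tri, |k₁ p.1 p.2 - k₂ p.1 p.2| ≤ A * (2 * p.1 - p.2) ^ n / n !)
    (hM : ∀ x ∈ Icc (0 : ℝ) 1, |g x| ≤ M) {x : ℝ} (hx : x ∈ Icc (0 : ℝ) 1) :
    |boundaryTerm g k₁ x - boundaryTerm g k₂ x| ≤ A * M * (2 * x) ^ (n + 1) / (n + 1)! := by
  have hM0 : 0 ≤ M := (abs_nonneg _).trans (hM 0 ⟨le_rfl, zero_le_one⟩)
  have hint : ∀ k, Continuous (uncurry k) →
      IntervalIntegrable (fun η => k x η * g η) volume 0 x :=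
    fun k hk => ((hk.comp (Continuous.prodMk_right x)).mul hg).intervalIntegrable _ _
  have hsub : boundaryTerm g k₁ x - boundaryTerm g k₂ x =
      ∫ η in (0 : ℝ)..x, (k₁ x η - k₂ x η) * g η := by
    simp only [boundaryTerm, sub_mul,
      intervalIntegral.integral_sub (hint k₁ hk₁) (hint k₂ hk₂)]
    ring
  rw [hsub, ← sub_zero (2 * x)]
  refine abs_integral_le_of_abs_le_pow_sub (by positivity) hx.1 (by linarith [hx.1])
    fun η hη => ?_
  have hkη := hk (x, η) ⟨hη.1, hη.2, hx.2⟩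
  rw [abs_mul, mul_right_comm, mul_div_right_comm]
  exact mul_le_mul hkη (hM η ⟨hη.1, hη.2.trans hx.2⟩) (abs_nonneg _)
    ((abs_nonneg _).trans hkη)

theorem abs_charRHS_sub_le (hf : Continuous (uncurry f)) (hk₁ : Continuous (uncurry k₁))
    (hk₂ : Continuous (uncurry k₂)) (hA : 0 ≤ A)
    (hk : ∀ p ∈ Tri, |k₁ p.1 p.2 - k₂ p.1 p.2| ≤ A * (2 * p.1 - p.2) ^ n / n !)
    (hM : ∀ p ∈ Tri, |f p.1 p.2| ≤ M) {x y : ℝ} (hxy : (x, y) ∈ Tri) :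
    |charRHS f k₁ x y - charRHS f k₂ x y| ≤ A * M * (2 * x - y) ^ (n + 1) / (n + 1)! := by
  obtain ⟨hy, hyx, hx⟩ := hxy
  have hM0 : 0 ≤ M := (abs_nonneg _).trans (hM (0, 0) ⟨le_rfl, le_rfl, zero_le_one⟩)
  have hint : ∀ k, Continuous (uncurry k) →
      IntervalIntegrable (fun ξ => k x ξ * f ξ y) volume y x :=
    fun k hk => ((hk.comp (Continuous.prodMk_right x)).mul
      (hf.comp (Continuous.prodMk_left y))).intervalIntegrable _ _
  have hsub : charRHS f k₁ x y - charRHS f k₂ x y =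
      ∫ ξ in y..x, (k₁ x ξ - k₂ x ξ) * f ξ y := by
    simp only [charRHS, sub_mul, intervalIntegral.integral_sub (hint k₁ hk₁) (hint k₂ hk₂)]
    ring
  rw [hsub]
  refine abs_integral_le_of_abs_le_pow_sub (by positivity) hyx (by linarith) fun ξ hξ => ?_
  have hkξ := hk (x, ξ) ⟨hy.trans hξ.1, hξ.2, hx⟩
  rw [abs_mul, mul_right_comm, mul_div_right_comm]
  exact mul_le_mul hkξ (hM (ξ, y) ⟨hy, hξ.1, hξ.2.trans hx⟩) (abs_nonneg _)
    ((abs_nonneg _).trans hkξ)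

theorem abs_kernelOperator_sub_le {Mf Mg : ℝ} (hf : Continuous (uncurry f)) (hg : Continuous g)
    (hk₁ : Continuous (uncurry k₁)) (hk₂ : Continuous (uncurry k₂)) (hA : 0 ≤ A)
    (hk : ∀ p ∈ Tri, |k₁ p.1 p.2 - k₂ p.1 p.2| ≤ A * (2 * p.1 - p.2) ^ n / n !)
    (hMf : ∀ p ∈ Tri, |f p.1 p.2| ≤ Mf) (hMg : ∀ x ∈ Icc (0 : ℝ) 1, |g x| ≤ Mg)
    {x y : ℝ} (hxy : (x, y) ∈ Tri) :
    |kernelOperator f g k₁ x y - kernelOperator f g k₂ x y| ≤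
      A * (Mg + Mf) * (2 * x - y) ^ (n + 1) / (n + 1)! := by
  obtain ⟨hy, hyx, hx⟩ := hxy
  have hMf0 : 0 ≤ Mf := (abs_nonneg _).trans (hMf (0, 0) ⟨le_rfl, le_rfl, zero_le_one⟩)
  have hMg0 : 0 ≤ Mg := (abs_nonneg _).trans (hMg 0 ⟨le_rfl, zero_le_one⟩)
  have hbdry := abs_boundaryTerm_sub_le hg hk₁ hk₂ hA hk hMg (x := x - y)
    ⟨by linarith, by linarith⟩
  have hchar :
      |∫ t in (0 : ℝ)..y, (charRHS f k₁ (x - y + t) t - charRHS f k₂ (x - y + t) t)| ≤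
      A * Mf * (2 * (x - y) + y) ^ (n + 1 + 1) / (n + 1 + 1)! := by
    refine abs_integral_le_of_abs_le_pow_add (by positivity) hy (by linarith) fun t ht => ?_
    have h := abs_charRHS_sub_le hf hk₁ hk₂ hA hk hMf (x := x - y + t) (y := t)
      ⟨ht.1, by linarith, by linarith [ht.2]⟩
    rwa [show 2 * (x - y + t) - t = 2 * (x - y) + t by ring] at h
  have hw : 2 * (x - y) + y = 2 * x - y := by ring
  rw [hw] at hchar
  have hpow : (2 * (x - y)) ^ (n + 1) ≤ (2 * x - y) ^ (n + 1) :=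
    pow_le_pow_left₀ (by linarith) (by linarith) _
  have hfac : (2 * x - y) ^ (n + 1 + 1) / (n + 1 + 1)! ≤ (2 * x - y) ^ (n + 1) / (n + 1)! :=
    pow_succ_div_factorial_le (by linarith) (by push_cast; linarith)
  calc |kernelOperator f g k₁ x y - kernelOperator f g k₂ x y|
      ≤ A * Mg * (2 * (x - y)) ^ (n + 1) / (n + 1)! +
          A * Mf * (2 * x - y) ^ (n + 1 + 1) / (n + 1 + 1)! := by
        rw [kernelOperator_sub hf hk₁ hk₂]
        exact (abs_add_le _ _).trans (add_le_add hbdry hchar)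
    _ ≤ A * Mg * (2 * x - y) ^ (n + 1) / (n + 1)! +
          A * Mf * ((2 * x - y) ^ (n + 1) / (n + 1)!) := by
        rw [mul_div_assoc (A * Mf)]
        gcongr
    _ = A * (Mg + Mf) * (2 * x - y) ^ (n + 1) / (n + 1)! := by ring

end Estimates

end Operator

def IsKernelSolution (f : ℝ → ℝ → ℝ) (g : ℝ → ℝ) (k : ℝ → ℝ → ℝ) : Prop :=
  ContinuousOn (fun p : ℝ × ℝ => k p.1 p.2) Tri ∧
    (∀ x y : ℝ, 0 ≤ y → y < x → x < 1 →
      HasDerivAt (fun s => k (x + s) (y + s)) (charRHS f k x y) 0) ∧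
    ∀ x ∈ Icc (0 : ℝ) 1, k x 0 = boundaryTerm g k x

section KernelMap

variable (fC : C(Tri, ℝ)) (gC : C(Icc (0 : ℝ) 1, ℝ))

def kernelMap (u : C(Tri, ℝ)) : C(Tri, ℝ) where
  toFun p := kernelOperator (extendTri fC) (IccExtend zero_le_one gC) (extendTri u) p.1.1 p.1.2
  continuous_toFun := (continuous_kernelOperator (continuous_extendTri fC)
    (gC.continuous.Icc_extend' (h := zero_le_one)) (continuous_extendTri u)).comp
      continuous_subtype_val

theorem abs_iterate_kernelMap_sub_le (n : ℕ) (u v : C(Tri, ℝ)) (p : Tri) :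
    |(kernelMap fC gC)^[n] u p - (kernelMap fC gC)^[n] v p| ≤
      dist u v * (‖gC‖ + ‖fC‖) ^ n * (2 * p.1.1 - p.1.2) ^ n / n ! := by
  induction n generalizing p with
  | zero => simpa [← Real.dist_eq] using ContinuousMap.dist_apply_le_dist (f := u) (g := v) p
  | succ n ih =>
    rw [iterate_succ_apply', iterate_succ_apply']
    refine (abs_kernelOperator_sub_le (continuous_extendTri fC) gC.continuous.Icc_extend'
      (continuous_extendTri _) (continuous_extendTri _) (A := dist u v * (‖gC‖ + ‖fC‖) ^ n)
      (by positivity) (fun ⟨x, y⟩ hq => ?_)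
      (fun q _ => fC.norm_coe_le_norm _) (fun x _ => gC.norm_coe_le_norm _) p.2).trans_eq
      (by ring)
    rw [extendTri_of_mem _ hq, extendTri_of_mem _ hq]
    exact ih ⟨_, hq⟩

theorem dist_iterate_kernelMap_le (n : ℕ) (u v : C(Tri, ℝ)) :
    dist ((kernelMap fC gC)^[n] u) ((kernelMap fC gC)^[n] v) ≤
      (2 * (‖gC‖ + ‖fC‖)) ^ n / n ! * dist u v := by
  refine (ContinuousMap.dist_le (by positivity)).2 fun p => ?_
  obtain ⟨⟨x, y⟩, hy, hyx, hx⟩ := p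
  have hw : (2 * x - y) ^ n ≤ 2 ^ n := pow_le_pow_left₀ (by linarith) (by linarith) n
  calc dist ((kernelMap fC gC)^[n] u _) ((kernelMap fC gC)^[n] v _)
      ≤ dist u v * (‖gC‖ + ‖fC‖) ^ n * (2 * x - y) ^ n / n ! :=
        abs_iterate_kernelMap_sub_le fC gC n u v _
    _ ≤ dist u v * (‖gC‖ + ‖fC‖) ^ n * 2 ^ n / n ! := by gcongr
    _ = (2 * (‖gC‖ + ‖fC‖)) ^ n / n ! * dist u v := by rw [mul_pow]; ring

variable {f : ℝ → ℝ → ℝ} {g : ℝ → ℝ}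

/-- The solution is `kernelOperator` of the fixed point on the whole plane, not `extendTri u`:
at points of `y = 0` the characteristic derivative also looks at `s < 0`, below `Tri`, where this
formula stays differentiable. -/
theorem isKernelSolution_kernelOperator (hf : ∀ p : Tri, fC p = f p.1.1 p.1.2)
    (hg : ∀ x : Icc (0 : ℝ) 1, gC x = g x) {u : C(Tri, ℝ)}
    (hu : IsFixedPt (kernelMap fC gC) u) :
    IsKernelSolution f g
      (kernelOperator (extendTri fC) (IccExtend zero_le_one gC) (extendTri u)) := by
  have hFf {x y : ℝ} (h : (x, y) ∈ Tri) : extendTri fC x y = f x y :=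
    (extendTri_of_mem fC h).trans (hf _)
  have hGg {x : ℝ} (h : x ∈ Icc (0 : ℝ) 1) : IccExtend zero_le_one gC x = g x :=
    (IccExtend_of_mem _ _ h).trans (hg _)
  have hKk {x y : ℝ} (h : (x, y) ∈ Tri) : extendTri u x y =
      kernelOperator (extendTri fC) (IccExtend zero_le_one gC) (extendTri u) x y := by
    rw [extendTri_of_mem u h, ← DFunLike.congr_fun hu]
    rfl
  refine ⟨(continuous_kernelOperator (continuous_extendTri fC) gC.continuous.Icc_extend'
    (continuous_extendTri u)).continuousOn, fun x y hy hyx hx => ?_, fun x hx => ?_⟩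
  · rw [← charRHS_congr hyx.le (fun ξ hξ => hFf ⟨hy, hξ.1, hξ.2.trans hx.le⟩)
      (fun ξ hξ => hKk ⟨hy.trans hξ.1, hξ.2, hx.le⟩)]
    exact hasDerivAt_kernelOperator_char (continuous_extendTri fC) (continuous_extendTri u) x y
  · rw [kernelOperator_zero]
    exact boundaryTerm_congr hx.1 (fun η hη => hGg ⟨hη.1, hη.2.trans hx.2⟩)
      (fun η hη => hKk ⟨hη.1, hη.2, hx.2⟩)

theorem isFixedPt_restrict_of_isKernelSolution (hf : ∀ p : Tri, fC p = f p.1.1 p.1.2)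
    (hg : ∀ x : Icc (0 : ℝ) 1, gC x = g x) {k : ℝ → ℝ → ℝ} (hk : IsKernelSolution f g k) :
    IsFixedPt (kernelMap fC gC) ⟨Tri.domRestrict fun p => k p.1 p.2, hk.1.domRestrict⟩ := by
  set v : C(Tri, ℝ) := ⟨Tri.domRestrict fun p => k p.1 p.2, hk.1.domRestrict⟩
  have hFf {x y : ℝ} (h : (x, y) ∈ Tri) : extendTri fC x y = f x y :=
    (extendTri_of_mem fC h).trans (hf _)
  have hGg {x : ℝ} (h : x ∈ Icc (0 : ℝ) 1) : IccExtend zero_le_one gC x = g x :=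
    (IccExtend_of_mem _ _ h).trans (hg _)
  have hKk {x y : ℝ} (h : (x, y) ∈ Tri) : extendTri v x y = k x y := extendTri_of_mem v h
  have hderiv (x y : ℝ) (hy : 0 ≤ y) (hyx : y < x) (hx : x < 1) :
      HasDerivAt (fun s => k (x + s) (y + s)) (charRHS (extendTri fC) (extendTri v) x y) 0 := by
    rw [charRHS_congr hyx.le (fun ξ hξ => hFf ⟨hy, hξ.1, hξ.2.trans hx.le⟩)
      (fun ξ hξ => hKk ⟨hy.trans hξ.1, hξ.2, hx.le⟩)]
    exact hk.2.1 x y hy hyx hx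
  have hcont := continuous_kernelOperator (continuous_extendTri fC)
    (gC.continuous.Icc_extend' (h := zero_le_one)) (continuous_extendTri v)
  have heq : EqOn (uncurry (kernelOperator (extendTri fC) (IccExtend zero_le_one gC)
      (extendTri v))) (uncurry k) Tri := by
    refine EqOn.of_subset_closure ?_ hcont.continuousOn hk.1 (sep_subset _ _)
      Tri_subset_closure_sep_lt
    rintro ⟨x, y⟩ ⟨⟨hy, -, hx⟩, hyx⟩
    have hc : x - y ∈ Icc (0 : ℝ) 1 := ⟨by linarith, by linarith⟩
    rw [uncurry_apply_pair, uncurry_apply_pair, kernelOperator,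
      eq_add_integral_of_hasDerivAt_char hk.1 (continuous_charRHS (continuous_extendTri fC)
        (continuous_extendTri v)) hderiv hy hyx hx, hk.2.2 _ hc,
      boundaryTerm_congr hc.1 (fun η hη => hGg ⟨hη.1, hη.2.trans hc.2⟩)
        (fun η hη => hKk ⟨hη.1, hη.2, hc.2⟩)]
  exact ContinuousMap.ext fun p => heq p.2

end KernelMap

end

theorem hyperbolic_kernel_wellposed
    (f : ℝ → ℝ → ℝ) (hf : ContinuousOn (fun p : ℝ × ℝ => f p.1 p.2) Tri)
    (g : ℝ → ℝ) (hg : ContinuousOn g (Icc 0 1)) :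
    ∃ k : ℝ → ℝ → ℝ,
      (ContinuousOn (fun p : ℝ × ℝ => k p.1 p.2) Tri ∧
        (∀ x y : ℝ, 0 ≤ y → y < x → x < 1 →
          HasDerivAt (fun s => k (x + s) (y + s))
            ((∫ ξ in y..x, k x ξ * f ξ y) - f x y) 0) ∧
        (∀ x ∈ Icc (0:ℝ) 1, k x 0 = (∫ y in (0:ℝ)..x, k x y * g y) - g x)) ∧
      ∀ k' : ℝ → ℝ → ℝ,
        (ContinuousOn (fun p : ℝ × ℝ => k' p.1 p.2) Tri ∧
          (∀ x y : ℝ, 0 ≤ y → y < x → x < 1 →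
            HasDerivAt (fun s => k' (x + s) (y + s))
              ((∫ ξ in y..x, k' x ξ * f ξ y) - f x y) 0) ∧
          (∀ x ∈ Icc (0:ℝ) 1, k' x 0 = (∫ y in (0:ℝ)..x, k' x y * g y) - g x)) →
        ∀ x y : ℝ, (x, y) ∈ Tri → k' x y = k x y := by
  let fC : C(Tri, ℝ) := ⟨Tri.domRestrict fun p => f p.1 p.2, hf.domRestrict⟩
  let gC : C(Icc (0 : ℝ) 1, ℝ) := ⟨(Icc 0 1).domRestrict g, hg.domRestrict⟩
  obtain ⟨u, hu, huniq⟩ :=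
    existsUnique_isFixedPt_of_dist_iterate_le _ (dist_iterate_kernelMap_le fC gC)
  refine ⟨_, isKernelSolution_kernelOperator fC gC (fun _ => rfl) (fun _ => rfl) hu,
    fun k hk x y hxy => ?_⟩
  have hku := huniq _
    (isFixedPt_restrict_of_isKernelSolution fC gC (fun _ => rfl) (fun _ => rfl) hk)
  calc k x y = u ⟨(x, y), hxy⟩ := DFunLike.congr_fun hku ⟨(x, y), hxy⟩
    _ = kernelMap fC gC u ⟨(x, y), hxy⟩ := by rw [hu]
    _ = _ := rfl
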